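/- arXiv:1504.00757 — 6 statements merged into one kernel-verified Lean document; each statement's English description precedes it below -/
import Mathlib

section
/- For the Mallows distribution with dispersion parameter 0 ≤ φ < 1 generated by the repeated insertion model (RIM) over items 1,...,Q inserted in order, where item s is inserted at position l ∈ {1,...,s} of the current partial sequence with probability φ^{s-l}/(1+φ+...+φ^{s-1}), the probability that item 1 occupies position r after the first s items have been inserted equals φ^{r-1}/(1+φ+...+φ^{s-1}), for all 1 ≤ r ≤ s ≤ Q. -/
/-- Probability that, in the repeated insertion model with dispersion `φ`,
the item inserted into a current sequence of length `s` (so the new sequence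
has length `s`) is placed at position `l ∈ {1,…,s}`. -/
noncomputable def insP (φ : ℝ) (s l : ℕ) : ℝ :=
  φ ^ (s - l) / ∑ t ∈ Finset.range s, φ ^ t

/-- `qpos φ s r` : probability that item 1 occupies position `r` after the
first `s` items have been inserted by the repeated insertion model. -/
noncomputable def qpos (φ : ℝ) : ℕ → ℕ → ℝ
  | 0, _ => 0
  | 1, r => if r = 1 then 1 else 0
  | (s+2), r =>
      qpos φ (s+1) r * (∑ l ∈ Finset.Icc (r+1) (s+2), insP φ (s+2) l)
      + qpos φ (s+1) (r-1) * (∑ l ∈ Finset.Icc 1 (r-1), insP φ (s+2) l)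

/-!
Write `S n = 1 + φ + ⋯ + φ^(n-1)`. When item `s+1` is inserted, item 1 stays at position `r`
if the new item lands after it, with probability `S (s+1-r) / S (s+1)`, and moves from `r-1`
to `r` if the new item lands at one of the positions `1, …, r-1`, with probability
`φ^(s+2-r) S (r-1) / S (s+1)`. Feeding the induction hypothesis `φ^(r-1) / S s` into this
recursion, the two contributions add up to `φ^(r-1) / S (s+1)` because of the splitting
`S s = S (s+1-r) + φ^(s+1-r) S (r-1)` of the geometric sum.
-/

open Finset

lemma geom_sum_range_add (φ : ℝ) (a b : ℕ) :
    ∑ t ∈ range (a + b), φ ^ t = ∑ t ∈ range a, φ ^ t + φ ^ a * ∑ t ∈ range b, φ ^ t := by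
  simp only [sum_range_add, pow_add, mul_sum]

lemma sum_insP_Icc_succ (φ : ℝ) (n r : ℕ) :
    ∑ l ∈ Icc (r + 1) n, insP φ n l = (∑ t ∈ range (n - r), φ ^ t) / ∑ t ∈ range n, φ ^ t := by
  simp only [insP, ← sum_div]
  rw [← Ico_add_one_right_eq_Icc, sum_Ico_reflect _ _ le_rfl,
    Nat.sub_self, Nat.add_sub_add_right, ← range_eq_Ico]

lemma sum_insP_Icc_one (φ : ℝ) {n k : ℕ} (hk : k ≤ n) :
    ∑ l ∈ Icc 1 k, insP φ n l = φ ^ (n - k) * (∑ t ∈ range k, φ ^ t) / ∑ t ∈ range n, φ ^ t := by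
  simp only [insP, ← sum_div]
  rw [← Ico_add_one_right_eq_Icc, sum_Ico_reflect _ _ (by omega),
    Nat.add_sub_add_right, sum_Ico_eq_sum_range, Nat.add_sub_cancel, Nat.sub_sub_self hk, mul_sum]
  simp only [pow_add]

theorem qpos_eq_pow_div_geom_sum (φ : ℝ) (hφ : 0 ≤ φ) :
    ∀ {s r : ℕ}, 1 ≤ r → r ≤ s → qpos φ s r = φ ^ (r - 1) / ∑ t ∈ range s, φ ^ t
  | 0, _, hr, hrs => by omega
  | 1, r, hr, hrs => by
      obtain rfl : r = 1 := by omega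
      simp [qpos]
  | s + 2, r, hr, hrs => by
      set S : ℕ → ℝ := fun n ↦ ∑ t ∈ range n, φ ^ t with hS
      have hS₁ : S (s + 1) ≠ 0 := (geom_sum_pos hφ (by omega)).ne'
      have hS₂ : S (s + 2) ≠ 0 := (geom_sum_pos hφ (by omega)).ne'
      -- At `r = s + 2` the first product vanishes through the empty sum `S 0`, and at `r = 1`
      -- the second one does, so the induction hypothesis is only needed away from these ends.
      have stay : qpos φ (s + 1) r * ∑ l ∈ Icc (r + 1) (s + 2), insP φ (s + 2) l
          = φ ^ (r - 1) * S (s + 2 - r) / (S (s + 1) * S (s + 2)) := by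
        rw [sum_insP_Icc_succ]
        obtain hlt | rfl := hrs.lt_or_eq
        · rw [qpos_eq_pow_div_geom_sum φ hφ hr (by omega), div_mul_div_comm]
        · simp [hS]
      have shift : qpos φ (s + 1) (r - 1) * ∑ l ∈ Icc 1 (r - 1), insP φ (s + 2) l
          = φ ^ (s + 1) * S (r - 1) / (S (s + 1) * S (s + 2)) := by
        rw [sum_insP_Icc_one φ (by omega)]
        obtain rfl | hlt := hr.eq_or_lt
        · simp [hS]
        · rw [qpos_eq_pow_div_geom_sum φ hφ (by omega) (by omega), div_mul_div_comm, ← mul_assoc,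
            ← pow_add]
          congr 3
          omega
      have split : S (s + 1) = S (s + 2 - r) + φ ^ (s + 2 - r) * S (r - 1) := by
        convert geom_sum_range_add φ (s + 2 - r) (r - 1) using 3
        omega
      have hpow : φ ^ (s + 1) = φ ^ (r - 1) * φ ^ (s + 2 - r) := by
        rw [← pow_add]
        congr 1
        omega
      rw [qpos, stay, shift, hpow, show ∑ t ∈ range (s + 2), φ ^ t = S (s + 2) from rfl]
      field_simp
      rw [split]

theorem stmt0_general (φ : ℝ) (hφ0 : 0 ≤ φ) (r s : ℕ)
    (hr : 1 ≤ r) (hrs : r ≤ s) :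
    qpos φ s r = φ ^ (r - 1) / ∑ t ∈ Finset.range s, φ ^ t :=
  qpos_eq_pow_div_geom_sum φ hφ0 hr hrs

/-- In the repeated insertion model over items `1,…,Q` with dispersion
`0 ≤ φ < 1`, the probability that item 1 occupies position `r` after the
first `s` items have been inserted equals `φ^(r-1)/(1+φ+⋯+φ^(s-1))`,
for all `1 ≤ r ≤ s ≤ Q`. -/
theorem stmt0 (φ : ℝ) (hφ0 : 0 ≤ φ) (hφ1 : φ < 1) (Q r s : ℕ)
    (hr : 1 ≤ r) (hrs : r ≤ s) (hsQ : s ≤ Q) :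
    qpos φ s r = φ ^ (r - 1) / ∑ t ∈ Finset.range s, φ ^ t :=
  stmt0_general φ hφ0 r s hr hrs
end

section
/- In the repeated insertion model with dispersion 0 ≤ φ < 1, the probability that item 1 is ranked before item j (for j > 1) equals (1 - j·φ^{j-1} + (j-1)·φ^{j}) / ((1-φ)^2 · (1+φ+...+φ^{j-2}) · (1+φ+...+φ^{j-1})). -/
lemma Zpos (φ : ℝ) (hφ : 0 ≤ φ) (s : ℕ) (hs : 1 ≤ s) :
    0 < ∑ t ∈ Finset.range s, φ ^ t := by
  apply Finset.sum_pos' (fun t _ => pow_nonneg hφ t)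
  exact ⟨0, Finset.mem_range.mpr hs, by norm_num⟩

lemma sum_pow_Icc (φ : ℝ) (a b : ℕ) :
    ∑ l ∈ Finset.Icc (a+1) b, φ ^ (b - l) = ∑ i ∈ Finset.range (b - a), φ ^ i := by
  have hIcc : Finset.Icc (a+1) b = Finset.Ico (a+1) (b+1) := by
    rw [Finset.Ico_add_one_right_eq_Icc]
  rw [hIcc, Finset.sum_Ico_eq_sum_range]
  have h : b + 1 - (a+1) = b - a := by omega
  rw [h, ← Finset.sum_range_reflect]
  apply Finset.sum_congr rfl
  intro i hi
  rw [Finset.mem_range] at hi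
  congr 1
  omega

lemma sum_insP (φ : ℝ) (a b : ℕ) :
    ∑ l ∈ Finset.Icc (a+1) b, insP φ b l
      = (∑ i ∈ Finset.range (b - a), φ ^ i) / ∑ t ∈ Finset.range b, φ ^ t := by
  unfold insP
  rw [← Finset.sum_div, sum_pow_Icc]

lemma sum_pow_Icc_one (φ : ℝ) (c N : ℕ) (h : c ≤ N) :
    ∑ l ∈ Finset.Icc 1 c, φ ^ (N - l) = φ ^ (N - c) * ∑ i ∈ Finset.range c, φ ^ i := by
  have hIcc : Finset.Icc 1 c = Finset.Ico 1 (c+1) := by rw [Finset.Ico_add_one_right_eq_Icc]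
  rw [hIcc, Finset.sum_Ico_eq_sum_range, Finset.mul_sum, ← Finset.sum_range_reflect]
  have h2 : c + 1 - 1 = c := by omega
  rw [h2]
  apply Finset.sum_congr rfl
  intro i hi
  rw [Finset.mem_range] at hi
  rw [← pow_add]
  congr 1
  omega

lemma sum_range_split (φ : ℝ) (m n : ℕ) :
    ∑ t ∈ Finset.range (m + n), φ ^ t
      = (∑ t ∈ Finset.range m, φ ^ t) + φ ^ m * ∑ t ∈ Finset.range n, φ ^ t := by
  rw [Finset.sum_range_add, Finset.mul_sum]
  simp [pow_add]

lemma qpos_eq (φ : ℝ) (hφ : 0 ≤ φ) :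
    ∀ s, ∀ r, 1 ≤ r → r ≤ s →
      qpos φ s r = φ ^ (r-1) / ∑ t ∈ Finset.range s, φ ^ t := by
  intro s
  induction s using Nat.strong_induction_on with
  | _ s ih =>
    match s with
    | 0 => intro r h1 h2; omega
    | 1 =>
      intro r h1 h2
      have : r = 1 := by omega
      subst this
      simp [qpos]
    | (s+2) =>
      intro r h1 h2
      have hZ1 : (0:ℝ) < ∑ t ∈ Finset.range (s+1), φ ^ t := Zpos φ hφ _ (by omega)
      have hZ2 : (0:ℝ) < ∑ t ∈ Finset.range (s+2), φ ^ t := Zpos φ hφ _ (by omega)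
      rcases Nat.lt_or_ge r 2 with hr | hr
      · -- r = 1
        have : r = 1 := by omega
        subst this
        rw [qpos]
        have hA : ∑ l ∈ Finset.Icc (1+1) (s+2), insP φ (s+2) l
            = (∑ i ∈ Finset.range (s+1), φ ^ i) / ∑ t ∈ Finset.range (s+2), φ ^ t := by
          have := sum_insP φ 1 (s+2)
          simpa using this
        rw [hA, ih (s+1) (by omega) 1 le_rfl (by omega)]
        have hempty : Finset.Icc 1 0 = (∅ : Finset ℕ) := Finset.Icc_eq_empty (by omega)
        rw [show (1:ℕ) - 1 = 0 from rfl, hempty]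
        simp only [Finset.sum_empty, mul_zero, add_zero, pow_zero]
        field_simp
      · -- r = k + 2
        obtain ⟨k, rfl⟩ : ∃ k, r = k + 2 := ⟨r - 2, by omega⟩
        have hk : k ≤ s := by omega
        rw [qpos]
        have hA : ∑ l ∈ Finset.Icc (k+2+1) (s+2), insP φ (s+2) l
            = (∑ i ∈ Finset.range (s-k), φ ^ i) / ∑ t ∈ Finset.range (s+2), φ ^ t := by
          have := sum_insP φ (k+2) (s+2)
          have h : s + 2 - (k+2) = s - k := by omega
          rw [h] at this
          exact this
        have hB : ∑ l ∈ Finset.Icc 1 (k+2-1), insP φ (s+2) l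
            = φ ^ (s+1-k) * (∑ i ∈ Finset.range (k+1), φ ^ i)
                / ∑ t ∈ Finset.range (s+2), φ ^ t := by
          unfold insP
          rw [← Finset.sum_div]
          congr 1
          have h : k + 2 - 1 = k + 1 := by omega
          rw [h, sum_pow_Icc_one φ (k+1) (s+2) (by omega)]
          congr 2
          omega
        rw [hA, hB]
        have hq2 : qpos φ (s+1) (k+2-1) = φ ^ k / ∑ t ∈ Finset.range (s+1), φ ^ t := by
          have := ih (s+1) (by omega) (k+1) (by omega) (by omega)
          simpa using this
        have hq1 : qpos φ (s+1) (k+2)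
            * ((∑ i ∈ Finset.range (s-k), φ ^ i) / ∑ t ∈ Finset.range (s+2), φ ^ t)
            = (φ ^ (k+1) / ∑ t ∈ Finset.range (s+1), φ ^ t)
            * ((∑ i ∈ Finset.range (s-k), φ ^ i) / ∑ t ∈ Finset.range (s+2), φ ^ t) := by
          rcases Nat.lt_or_ge k s with h | h
          · rw [ih (s+1) (by omega) (k+2) (by omega) (by omega)]
            norm_num
          · have hsk : s - k = 0 := by omega
            simp [hsk]
        rw [hq1, hq2]
        have hsplit : ∑ t ∈ Finset.range (s+1), φ ^ t
            = (∑ t ∈ Finset.range (s-k), φ ^ t) + φ ^ (s-k) * ∑ t ∈ Finset.range (k+1), φ ^ t := by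
          have h : s + 1 = (s-k) + (k+1) := by omega
          rw [h, sum_range_split]
        have hp1 : φ ^ (s+1-k) = φ ^ (s-k) * φ := by
          rw [← pow_succ]; congr 1; omega
        have hp2 : φ ^ (k+2-1) = φ ^ k * φ := by
          rw [show k+2-1 = k+1 from rfl, pow_succ]
        rw [hp1, hp2]
        field_simp
        rw [hsplit]
        ring

/-- Probability that item 1 is ranked before item `j` in the repeated
insertion model: summing over the position `r` of item 1 after `j-1`
insertions, item `j` must be inserted at a position `l > r`. -/
noncomputable def probOneBeforeJ (φ : ℝ) (j : ℕ) : ℝ :=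
  ∑ r ∈ Finset.Icc 1 (j-1), qpos φ (j-1) r * ∑ l ∈ Finset.Icc (r+1) j, insP φ j l

/-- In the repeated insertion model with dispersion `0 ≤ φ < 1`, the
probability that item 1 is ranked before item `j` (for `j > 1`) equals
`(1 - j φ^(j-1) + (j-1) φ^j)/((1-φ)² (1+⋯+φ^(j-2}) (1+⋯+φ^(j-1)))`. -/
theorem stmt1 (φ : ℝ) (hφ0 : 0 ≤ φ) (hφ1 : φ < 1) (j : ℕ) (hj : 2 ≤ j) :
    probOneBeforeJ φ j =
      (1 - (j:ℝ) * φ ^ (j-1) + ((j:ℝ) - 1) * φ ^ j) /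
        ((1 - φ)^2 * (∑ t ∈ Finset.range (j-1), φ ^ t) * (∑ t ∈ Finset.range j, φ ^ t)) := by
  obtain ⟨m, rfl⟩ : ∃ m, j = m + 1 := ⟨j - 1, by omega⟩
  have hm : 1 ≤ m := by omega
  have hZm : (0:ℝ) < ∑ t ∈ Finset.range m, φ ^ t := Zpos φ hφ0 m hm
  have hZm1 : (0:ℝ) < ∑ t ∈ Finset.range (m+1), φ ^ t := Zpos φ hφ0 _ (by omega)
  have h1φ : (1:ℝ) - φ ≠ 0 := by linarith
  have hsub : m + 1 - 1 = m := by omega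
  unfold probOneBeforeJ
  rw [hsub]
  -- rewrite each summand
  have hterm : ∀ r ∈ Finset.Icc 1 m,
      qpos φ m r * ∑ l ∈ Finset.Icc (r+1) (m+1), insP φ (m+1) l
        = (φ ^ (r-1) * ∑ i ∈ Finset.range (m+1-r), φ ^ i)
            / ((∑ t ∈ Finset.range m, φ ^ t) * ∑ t ∈ Finset.range (m+1), φ ^ t) := by
    intro r hr
    rw [Finset.mem_Icc] at hr
    rw [qpos_eq φ hφ0 m r hr.1 hr.2, sum_insP φ r (m+1)]
    rw [div_mul_div_comm]
  rw [Finset.sum_congr rfl hterm, ← Finset.sum_div]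
  -- reindex Icc 1 m to range m
  have hIcc : Finset.Icc 1 m = Finset.Ico 1 (m+1) := by rw [Finset.Ico_add_one_right_eq_Icc]
  rw [hIcc, Finset.sum_Ico_eq_sum_range]
  have hsub2 : m + 1 - 1 = m := by omega
  rw [hsub2]
  -- the key sum
  set T := ∑ i ∈ Finset.range m, φ ^ (1 + i - 1) * ∑ t ∈ Finset.range (m+1-(1+i)), φ ^ t with hT
  have hgeom : ∀ n : ℕ, (1 - φ) * ∑ t ∈ Finset.range n, φ ^ t = 1 - φ ^ n := by
    intro n
    linear_combination -(geom_sum_mul φ n)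
  have hTkey : (1 - φ) * T = (∑ t ∈ Finset.range m, φ ^ t) - m * φ ^ m := by
    rw [hT, Finset.mul_sum]
    have : ∀ i ∈ Finset.range m,
        (1 - φ) * (φ ^ (1 + i - 1) * ∑ t ∈ Finset.range (m+1-(1+i)), φ ^ t)
          = φ ^ i - φ ^ m := by
      intro i hi
      rw [Finset.mem_range] at hi
      have h1 : 1 + i - 1 = i := by omega
      rw [h1, mul_left_comm, hgeom (m+1-(1+i))]
      have h2 : φ ^ i * (1 - φ ^ (m+1-(1+i))) = φ ^ i - φ ^ m := by
        rw [mul_sub, mul_one, ← pow_add]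
        congr 2
        omega
      exact h2
    rw [Finset.sum_congr rfl this, Finset.sum_sub_distrib, Finset.sum_const,
      Finset.card_range, nsmul_eq_mul]
  -- finish
  have hcast : ((m:ℝ) + 1) = ((m+1 : ℕ) : ℝ) := by push_cast; ring
  push_cast
  rw [div_eq_div_iff (by positivity) (by
    have := hgeom m
    have h2 : (1 - φ) ^ 2 > 0 := by positivity
    positivity)]
  have hgm := hgeom m
  linear_combination ((1-φ) * (∑ t ∈ Finset.range m, φ ^ t) * (∑ t ∈ Finset.range (m+1), φ ^ t)) * hTkey
    + ((∑ t ∈ Finset.range m, φ ^ t) * (∑ t ∈ Finset.range (m+1), φ ^ t)) * hgm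
end

section
/- Let 0 ≤ φ < 1 and j ≥ 2. Then (1 - j·φ^{j-1} + (j-1)·φ^{j}) / (φ^{j-1}·(j-1 - j·φ + φ^{j})) ≥ 1/(j·φ^{j-1}), where for φ = 0 the quantity on the left is interpreted as +∞. Equivalently, the ratio of the probability that item 1 beats item j to the probability that item j beats item 1 under a Mallows model with reference ranking 1 ≺ ... ≺ Q and dispersion φ is at least 1/(j·φ^{j-1}). -/
/-- For a Mallows model with reference ranking `1 ≺ ⋯ ≺ Q` and dispersion
`0 ≤ φ < 1`, the ratio of the probability that item 1 beats item `j` to the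
probability that item `j` beats item 1 is at least `1/(j φ^(j-1))`
(in Lean, at `φ = 0` both sides are `0` by the convention `x/0 = 0`,
matching the interpretation of the left side as `+∞`). -/
theorem stmt3 (φ : ℝ) (hφ0 : 0 ≤ φ) (hφ1 : φ < 1) (j : ℕ) (hj : 2 ≤ j) :
    (1 - (j:ℝ) * φ ^ (j-1) + ((j:ℝ) - 1) * φ ^ j) /
        (φ ^ (j-1) * (((j:ℝ) - 1) - (j:ℝ) * φ + φ ^ j))
      ≥ 1 / ((j:ℝ) * φ ^ (j-1)) := by
  obtain ⟨m, rfl⟩ : ∃ m, j = m + 2 := ⟨j - 2, by omega⟩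
  rcases eq_or_lt_of_le hφ0 with h0 | hpos
  · -- φ = 0 : both sides are 0
    rw [← h0]
    simp
  -- φ > 0
  have hm1 : (m : ℕ) + 2 - 1 = m + 1 := by omega
  rw [hm1]
  push_cast
  set S : ℝ := ∑ k ∈ Finset.range (m + 1), φ ^ k with hSdef
  have hgeom : (1 - φ) * S = 1 - φ ^ (m + 1) := by
    have := geom_sum_mul φ (m + 1)
    rw [hSdef]
    nlinarith [this]
  have hS_le : S ≤ (m : ℝ) + 1 := by
    calc S ≤ ∑ _k ∈ Finset.range (m + 1), (1 : ℝ) := by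
            apply Finset.sum_le_sum
            intro k _
            exact pow_le_one₀ hφ0 hφ1.le
      _ = (m : ℝ) + 1 := by simp
  have hS_ge : ((m : ℝ) + 1) * φ ^ m ≤ S := by
    calc ((m : ℝ) + 1) * φ ^ m = ∑ _k ∈ Finset.range (m + 1), φ ^ m := by
            simp [mul_comm]
      _ ≤ S := by
            apply Finset.sum_le_sum
            intro k hk
            exact pow_le_pow_of_le_one hφ0 hφ1.le (by
              simp only [Finset.mem_range] at hk; omega)
  have hx : (0:ℝ) < φ ^ (m + 1) := pow_pos hpos _
  have hpow_le : φ ^ (m + 1) ≤ 1 := pow_le_one₀ hφ0 hφ1.le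
  set N : ℝ := 1 - ((m : ℝ) + 2) * φ ^ (m + 1) + ((m : ℝ) + 2 - 1) * φ ^ (m + 2) with hN
  set D : ℝ := ((m : ℝ) + 2 - 1) - ((m : ℝ) + 2) * φ + φ ^ (m + 2) with hD
  have hD_pos : 0 < D := by
    have hid : D = (1 - φ) * (((m : ℝ) + 1) - φ * S) := by
      rw [hD]; linear_combination φ * hgeom
    rw [hid]
    have h1 : φ * S ≤ φ * ((m : ℝ) + 1) := by
      exact mul_le_mul_of_nonneg_left hS_le hpos.le
    have h2 : φ * ((m : ℝ) + 1) < (m : ℝ) + 1 := by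
      nlinarith [Nat.cast_nonneg (α := ℝ) m]
    nlinarith
  have hkey : D ≤ ((m : ℝ) + 2) * N := by
    have hfe : ((m : ℝ) + 2) * N - D
        = (1 - φ) * (1 - φ ^ (m + 1))
          + ((m : ℝ) + 3) * φ * (1 - φ) * (S - ((m : ℝ) + 1) * φ ^ m) := by
      rw [hN, hD]; linear_combination (-((m : ℝ) + 3) * φ) * hgeom
    have h1 : 0 ≤ (1 - φ) * (1 - φ ^ (m + 1)) := by nlinarith
    have h2 : 0 ≤ ((m : ℝ) + 3) * φ * (1 - φ) * (S - ((m : ℝ) + 1) * φ ^ m) := by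
      apply mul_nonneg
      apply mul_nonneg
      apply mul_nonneg
      · positivity
      · exact hpos.le
      · linarith
      · linarith
    linarith
  rw [ge_iff_le, div_le_div_iff₀ (by positivity) (mul_pos hx hD_pos)]
  nlinarith [mul_le_mul_of_nonneg_left hkey hx.le]
end

section
/- Let σ_k be a permutation of Q items and φ ∈ [0,1). Let β_{(i,j)} denote the probability under the Mallows distribution with reference σ_k and dispersion φ that item i is ranked before item j. If σ_k(i) > σ_k(j) (item j is preferred to item i in the reference) and L = σ_k(i) - σ_k(j) + 1, then β_{(i,j)} ≤ L·φ^{L-1}/(1 + L·φ^{L-1}). -/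
/-!
Writing `σ = ρ * σk` turns the Kendall distance to `σk` into the number of inversions of `ρ`, and
the event `σ i < σ j` into `ρ a < ρ b` for the items `b = σk j < a = σk i`. The permutations that
move only items of the block `[b, a]` form a subgroup `G`. Every coset `ρ G` has a representative
`ρ₀` that is increasing on the block, and then `inv (ρ₀ * g) = inv ρ₀ + inv g` for `g ∈ G`; so the
claim reduces to the same inequality inside `G`, with the factor `L φ ^ (L - 1)`, `L = a - b + 1`.

Inside `G`, take `g` with `g a < g b`. Lower the rank of `b` to the bottom of the block, then raise
the rank of `a` so that exactly `g b - g a - 1` ranks of the block remain above it. This removes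
exactly `L - 1` inversions, puts `b` before `a`, and together with `g a` (one of `L` values)
determines `g`. Hence `A ≤ L φ ^ (L - 1) B` for the masses `A`, `B` of the two events, and
`β = A / (A + B)` is at most `L φ ^ (L - 1) / (1 + L φ ^ (L - 1))`.
-/

/-- Kendall's tau distance between two permutations of `Fin Q`. -/
def kendall {Q : ℕ} (σ τ : Equiv.Perm (Fin Q)) : ℕ :=
  ((Finset.univ : Finset (Fin Q × Fin Q)).filter
    (fun p => p.1 < p.2 ∧ ¬ ((σ p.1 < σ p.2) ↔ (τ p.1 < τ p.2)))).card

/-- The Mallows probability of the permutation `σ`, with reference ranking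
`σk` and dispersion `φ`: proportional to `φ ^ d(σ, σk)` with `d` the
Kendall tau distance. -/
noncomputable def mallowsProb {Q : ℕ} (σk : Equiv.Perm (Fin Q)) (φ : ℝ)
    (σ : Equiv.Perm (Fin Q)) : ℝ :=
  φ ^ kendall σ σk / ∑ τ : Equiv.Perm (Fin Q), φ ^ kendall τ σk

/-- `mallowsBeta σk φ i j` : probability that item `i` is ranked before item
`j` under the Mallows distribution with reference `σk` and dispersion `φ`. -/
noncomputable def mallowsBeta {Q : ℕ} (σk : Equiv.Perm (Fin Q)) (φ : ℝ)
    (i j : Fin Q) : ℝ :=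
  ∑ σ : Equiv.Perm (Fin Q), if σ i < σ j then mallowsProb σk φ σ else 0

open Finset Equiv

namespace Equiv.Perm

variable {n : ℕ}

def inversions (ρ : Perm (Fin n)) : Finset (Fin n × Fin n) :=
  {p | p.1 < p.2 ∧ ρ p.2 < ρ p.1}

@[simp] lemma mem_inversions {ρ : Perm (Fin n)} {p : Fin n × Fin n} :
    p ∈ ρ.inversions ↔ p.1 < p.2 ∧ ρ p.2 < ρ p.1 := by
  simp [inversions]

@[simp] lemma inversions_one : (1 : Perm (Fin n)).inversions = ∅ :=
  eq_empty_of_forall_notMem fun _ hp => lt_asymm (mem_inversions.1 hp).1 (mem_inversions.1 hp).2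

lemma card_filter_apply_mem {α : Type*} [Fintype α] [DecidableEq α] (ρ : Perm α)
    (s : Finset α) : #{y | ρ y ∈ s} = #s := by
  rw [← card_map ρ.symm.toEmbedding (s := s)]
  congr 1
  ext y
  simp

end Equiv.Perm

open Equiv.Perm

lemma card_discordant_eq {α β γ : Type*} [Fintype α] [LinearOrder α] [LinearOrder β]
    [LinearOrder γ] {f : α → β} {g : α → γ} (hf : Function.Injective f)
    (hg : Function.Injective g) :
    #{p : α × α | p.1 < p.2 ∧ ¬(f p.1 < f p.2 ↔ g p.1 < g p.2)} =
      #{p : α × α | g p.1 < g p.2 ∧ f p.2 < f p.1} := by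
  refine card_nbij' (fun p => if g p.1 < g p.2 then p else p.swap)
    (fun p => if p.1 < p.2 then p else p.swap) ?_ ?_ ?_ ?_
  all_goals
    rintro ⟨x, y⟩ h
    have := @hf x y
    have := @hg x y
    simp only [coe_filter, Set.mem_ofPred_eq] at h ⊢
    grind

lemma kendall_eq_card_inversions {n : ℕ} (σ τ : Perm (Fin n)) :
    kendall σ τ = #(σ * τ⁻¹).inversions := by
  rw [kendall, card_discordant_eq σ.injective τ.injective]
  refine card_nbij' (Prod.map τ τ) (Prod.map τ.symm τ.symm) ?_ ?_ ?_ ?_ <;>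
    rintro ⟨x, y⟩ <;> simp [mul_apply]

lemma Fin.val_cycleIcc {n : ℕ} (i j k : Fin n) :
    (cycleIcc i j k : ℕ) = if k < i ∨ j < k then (k : ℕ) else if k = j then (i : ℕ) else k + 1 := by
  have : NeZero n := i.neZero
  rcases lt_or_ge k i with hki | hik
  · simp [cycleIcc_of_lt hki, hki]
  rcases lt_or_ge j k with hjk | hkj
  · simp [cycleIcc_of_gt hjk, hjk]
  rw [cycleIcc_of_le_of_le hik hkj, if_neg (show ¬(k < i ∨ j < k) by simp [hik, hkj])]
  split_ifs with hkj'
  · rfl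
  · exact val_add_one_of_lt' (by have := lt_of_le_of_ne hkj hkj'; omega)

/-- Moving the rank of `x₀` from `j` down to `i` reverses exactly its order with the items ranked
in `[i, j)`. -/
lemma card_inversions_cycleIcc_mul {n : ℕ} {ρ : Perm (Fin n)} {i j x₀ : Fin n} (hx₀ : ρ x₀ = j) :
    #(Fin.cycleIcc i j * ρ).inversions + #{y | x₀ < y ∧ ρ y ∈ Ico i j} =
      #ρ.inversions + #{y | y < x₀ ∧ ρ y ∈ Ico i j} := by
  have key : (Fin.cycleIcc i j * ρ).inversions ∪
        ({y | x₀ < y ∧ ρ y ∈ Ico i j} : Finset _).image (x₀, ·) =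
      ρ.inversions ∪ ({y | y < x₀ ∧ ρ y ∈ Ico i j} : Finset _).image (·, x₀) := by
    ext ⟨x, y⟩
    have hx : x = x₀ ↔ ρ x = j := hx₀ ▸ ρ.injective.eq_iff.symm
    have hy : y = x₀ ↔ ρ y = j := hx₀ ▸ ρ.injective.eq_iff.symm
    have hxy : x = y ↔ ρ x = ρ y := ρ.injective.eq_iff.symm
    simp only [mem_union, mem_inversions, mem_image, mem_filter, mem_univ, true_and,
      Prod.mk.injEq, ← and_assoc, exists_and_right, exists_eq_right]
    simp only [mul_apply, mem_Ico, Fin.lt_def, Fin.le_def, Fin.val_cycleIcc, Fin.ext_iff]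
      at hx hy hxy ⊢
    split_ifs <;> omega
  have hX : Disjoint (Fin.cycleIcc i j * ρ).inversions
      (({y | x₀ < y ∧ ρ y ∈ Ico i j} : Finset _).image (x₀, ·)) := by
    refine disjoint_left.2 fun p hp hq => ?_
    obtain ⟨y, hy, rfl⟩ := mem_image.1 hq
    simp only [mem_inversions, mul_apply, mem_filter, mem_univ, true_and, mem_Ico, Fin.lt_def,
      Fin.le_def, Fin.val_cycleIcc, hx₀] at hp hy
    split_ifs at hp <;> omega
  have hY : Disjoint ρ.inversions
      (({y | y < x₀ ∧ ρ y ∈ Ico i j} : Finset _).image (·, x₀)) := by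
    refine disjoint_left.2 fun p hp hq => ?_
    obtain ⟨y, hy, rfl⟩ := mem_image.1 hq
    simp only [mem_inversions, mem_filter, mem_univ, true_and, mem_Ico, hx₀] at hp hy
    exact absurd hy.2.2 (not_lt.2 hp.2.le)
  have := congrArg card key
  rwa [card_union_of_disjoint hX, card_union_of_disjoint hY,
    card_image_of_injective _ (Prod.mk_left_injective x₀),
    card_image_of_injective _ (Prod.mk_right_injective x₀)] at this

section Averaging

variable {G M : Type*} [Group G] [Fintype G] [AddCommMonoid M]

lemma sum_sum_mul_right (S : Finset G) (f : G → M) :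
    ∑ x, ∑ g ∈ S, f (x * g) = #S • ∑ x, f x := by
  rw [sum_comm, ← sum_const]
  exact sum_congr rfl fun g _ => Equiv.sum_comp (Equiv.mulRight g) f

lemma sum_mem_subgroup_mul_left (H : Subgroup G) [DecidablePred (· ∈ H)] {h : G} (hh : h ∈ H)
    (f : G → M) : ∑ g with g ∈ H, f (h * g) = ∑ g with g ∈ H, f g := by
  refine sum_nbij' (h * ·) (h⁻¹ * ·) ?_ ?_ ?_ ?_ ?_ <;> intro g
  all_goals simp [H.mul_mem_cancel_left hh, H.mul_mem_cancel_left (H.inv_mem hh)]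

lemma sum_le_mul_sum_of_forall_coset {S : Finset G} (hS : S.Nonempty) {f f' : G → ℝ} {c : ℝ}
    (h : ∀ x, ∑ g ∈ S, f (x * g) ≤ c * ∑ g ∈ S, f' (x * g)) :
    ∑ x, f x ≤ c * ∑ x, f' x := by
  refine le_of_nsmul_le_nsmul_right hS.card_pos.ne' ?_
  rw [← sum_sum_mul_right, nsmul_eq_mul, mul_left_comm, ← nsmul_eq_mul, ← sum_sum_mul_right,
    mul_sum]
  exact sum_le_sum fun x _ => h x

end Averaging

namespace Equiv.Perm

variable {n : ℕ} {b a : Fin n}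

def blockSubgroup (b a : Fin n) : Subgroup (Perm (Fin n)) :=
  fixingSubgroup (Perm (Fin n)) (Set.Icc b a)ᶜ

lemma mem_blockSubgroup {g : Perm (Fin n)} :
    g ∈ blockSubgroup b a ↔ ∀ x, x ∉ Set.Icc b a → g x = x := by
  simp [blockSubgroup, mem_fixingSubgroup_iff]

instance : DecidablePred (· ∈ blockSubgroup b a) := fun _ =>
  decidable_of_iff' _ mem_blockSubgroup

lemma cycleIcc_mem_blockSubgroup {i j : Fin n} (hi : b ≤ i) (hj : j ≤ a) :
    Fin.cycleIcc i j ∈ blockSubgroup b a := by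
  refine mem_blockSubgroup.2 fun x hx => ?_
  rcases not_and_or.1 hx with hx | hx
  · exact Fin.cycleIcc_of_lt ((not_le.1 hx).trans_le hi)
  · exact Fin.cycleIcc_of_gt (hj.trans_lt (not_le.1 hx))

lemma apply_mem_Icc_iff {g : Perm (Fin n)} (hg : g ∈ blockSubgroup b a) {x : Fin n} :
    g x ∈ Set.Icc b a ↔ x ∈ Set.Icc b a := by
  rw [mem_blockSubgroup] at hg
  by_cases hx : x ∈ Set.Icc b a
  · refine iff_of_true (by_contra fun hgx => hgx ?_) hx
    rwa [g.injective (hg _ hgx)]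
  · rw [hg x hx]

lemma apply_lt_apply_iff_of_notMem {g : Perm (Fin n)} (hg : g ∈ blockSubgroup b a)
    {x y : Fin n} (hxy : x ∉ Set.Icc b a ∨ y ∉ Set.Icc b a) : g x < g y ↔ x < y := by
  have hx := apply_mem_Icc_iff hg (x := x)
  have hy := apply_mem_Icc_iff hg (x := y)
  rw [mem_blockSubgroup] at hg
  by_cases hx' : x ∈ Set.Icc b a <;> by_cases hy' : y ∈ Set.Icc b a
  · tauto
  all_goals
    simp only [hx', hy', not_false_eq_true, hg, iff_true] at hx hy ⊢ <;>
    simp only [Set.mem_Icc, Fin.le_def, Fin.lt_def, not_and_or, not_le] at hx hy hx' hy' ⊢ <;>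
    omega

lemma card_inversions_mul {ρ g : Perm (Fin n)} (hρ : StrictMonoOn ρ (Set.Icc b a))
    (hg : g ∈ blockSubgroup b a) : #(ρ * g).inversions = #ρ.inversions + #g.inversions := by
  have inside : {p ∈ (ρ * g).inversions | p.1 ∈ Set.Icc b a ∧ p.2 ∈ Set.Icc b a} =
      g.inversions := by
    ext ⟨x, y⟩
    simp only [mem_filter, mem_inversions, mul_apply]
    constructor
    · rintro ⟨⟨hxy, hρxy⟩, hx, hy⟩
      exact ⟨hxy, (hρ.lt_iff_lt ((apply_mem_Icc_iff hg).2 hy) ((apply_mem_Icc_iff hg).2 hx)).1 hρxy⟩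
    · rintro ⟨hxy, hgxy⟩
      have hK : x ∈ Set.Icc b a ∧ y ∈ Set.Icc b a := by
        by_contra hK
        exact lt_asymm hxy ((apply_lt_apply_iff_of_notMem hg (not_and_or.1 hK).symm).1 hgxy)
      exact ⟨⟨hxy, hρ ((apply_mem_Icc_iff hg).2 hK.2) ((apply_mem_Icc_iff hg).2 hK.1) hgxy⟩, hK⟩
  have outside : #{p ∈ (ρ * g).inversions | ¬(p.1 ∈ Set.Icc b a ∧ p.2 ∈ Set.Icc b a)} =
      #ρ.inversions := by
    have hg' := inv_mem hg
    refine card_nbij' (Prod.map g g) (Prod.map ⇑g⁻¹ ⇑g⁻¹) ?_ ?_ ?_ ?_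
    · rintro ⟨x, y⟩ h
      simp only [coe_filter, mem_inversions, mul_apply, not_and_or, Set.mem_ofPred_eq] at h
      rw [mem_coe, mem_inversions]
      exact ⟨(apply_lt_apply_iff_of_notMem hg h.2).2 h.1.1, h.1.2⟩
    · rintro ⟨x, y⟩ h
      simp only [mem_coe, mem_inversions] at h
      have hK : x ∉ Set.Icc b a ∨ y ∉ Set.Icc b a :=
        not_and_or.1 fun hK => lt_asymm h.2 (hρ hK.1 hK.2 h.1)
      have hK' : g⁻¹ x ∉ Set.Icc b a ∨ g⁻¹ y ∉ Set.Icc b a := by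
        simpa only [apply_mem_Icc_iff hg'] using hK
      simp only [coe_filter, mem_inversions, Prod.map_fst, Prod.map_snd, mul_apply,
        Perm.coe_inv, apply_symm_apply, Set.mem_ofPred_eq]
      exact ⟨⟨(apply_lt_apply_iff_of_notMem hg' hK).2 h.1, h.2⟩, not_and_or.2 hK'⟩
    · rintro ⟨x, y⟩ -
      simp
    · rintro ⟨x, y⟩ -
      simp
  rw [← card_filter_add_card_filter_not
    (fun p => p.1 ∈ Set.Icc b a ∧ p.2 ∈ Set.Icc b a), inside, outside, add_comm]

lemma exists_strictMonoOn_mul (ρ : Perm (Fin n)) (b a : Fin n) :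
    ∃ g ∈ blockSubgroup b a, StrictMonoOn (ρ * g) (Set.Icc b a) := by
  set K := Finset.Icc b a
  set T := K.map ρ.toEmbedding
  let e : K ≃o T := (K.orderIsoOfFin rfl).symm.trans (T.orderIsoOfFin (card_map _))
  let r : T ≃ K := ρ.symm.subtypeEquiv fun x => by simp [T]
  have hg (x : Fin n) (hx : x ∈ K) : (ρ * ofSubtype (e.toEquiv.trans r)) x = e ⟨x, hx⟩ := by
    simp [ofSubtype_apply_of_mem _ hx, r]
  refine ⟨ofSubtype (e.toEquiv.trans r), mem_blockSubgroup.2 fun x hx => ?_, ?_⟩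
  · exact ofSubtype_apply_of_not_mem _ (by simpa [K] using hx)
  · intro x hx y hy hxy
    have hx' : x ∈ K := by simpa [K] using hx
    have hy' : y ∈ K := by simpa [K] using hy
    rw [hg x hx', hg y hy']
    exact e.strictMono (show (⟨x, hx'⟩ : K) < ⟨y, hy'⟩ from hxy)

section Straighten

variable {g : Perm (Fin n)}

lemma apply_left_mem (hg : g ∈ blockSubgroup b a) (hba : b ≤ a) : g b ∈ Set.Icc b a :=
  (apply_mem_Icc_iff hg).2 ⟨le_rfl, hba⟩

lemma apply_right_mem (hg : g ∈ blockSubgroup b a) (hba : b ≤ a) : g a ∈ Set.Icc b a :=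
  (apply_mem_Icc_iff hg).2 ⟨hba, le_rfl⟩

lemma mem_Icc_of_apply_mem_Ico (hg : g ∈ blockSubgroup b a) {i j y : Fin n} (hi : b ≤ i)
    (hj : j ≤ a) (hy : g y ∈ Ico i j) : y ∈ Set.Icc b a := by
  rw [← apply_mem_Icc_iff hg]
  rw [mem_Ico] at hy
  exact ⟨hi.trans hy.1, hy.2.le.trans hj⟩

lemma card_inversions_cycleIcc_mul_apply_left (hg : g ∈ blockSubgroup b a) (hba : b ≤ a)
    {i : Fin n} (hi : b ≤ i) :
    #(Fin.cycleIcc i (g b) * g).inversions + (g b - i : ℕ) = #g.inversions := by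
  have hmem {y} := mem_Icc_of_apply_mem_Ico (y := y) hg hi (apply_left_mem hg hba).2
  have h := card_inversions_cycleIcc_mul (i := i) (rfl : g b = g b)
  have hafter : ({y | b < y ∧ g y ∈ Ico i (g b)} : Finset (Fin n)) =
      ({y | g y ∈ Ico i (g b)} : Finset (Fin n)) := by
    refine filter_congr fun y _ => and_iff_right_of_imp fun hy => (hmem hy).1.lt_of_ne ?_
    rintro rfl
    exact right_notMem_Ico hy
  have hbefore : ({y | y < b ∧ g y ∈ Ico i (g b)} : Finset (Fin n)) = ∅ :=
    filter_eq_empty_iff.2 fun y _ hy => not_lt.2 (hmem hy.2).1 hy.1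
  rwa [hafter, hbefore, card_filter_apply_mem, Fin.card_Ico, card_empty, add_zero] at h

lemma card_inversions_cycleIcc_mul_apply_right (hg : g ∈ blockSubgroup b a) (hba : b ≤ a)
    {i : Fin n} (hi : b ≤ i) :
    #(Fin.cycleIcc i (g a) * g).inversions = #g.inversions + (g a - i : ℕ) := by
  have hmem {y} := mem_Icc_of_apply_mem_Ico (y := y) hg hi (apply_right_mem hg hba).2
  have h := card_inversions_cycleIcc_mul (i := i) (rfl : g a = g a)
  have hafter : ({y | a < y ∧ g y ∈ Ico i (g a)} : Finset (Fin n)) = ∅ :=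
    filter_eq_empty_iff.2 fun y _ hy => not_lt.2 (hmem hy.2).2 hy.1
  have hbefore : ({y | y < a ∧ g y ∈ Ico i (g a)} : Finset (Fin n)) =
      ({y | g y ∈ Ico i (g a)} : Finset (Fin n)) := by
    refine filter_congr fun y _ => and_iff_right_of_imp fun hy => (hmem hy).2.lt_of_ne ?_
    rintro rfl
    exact right_notMem_Ico hy
  rwa [hafter, hbefore, card_filter_apply_mem, Fin.card_Ico, card_empty, add_zero] at h

/-- After the first cycle the rank of `a` is `g a + 1`; the second moves it to
`a - (g b - (g a + 1))`, which leaves exactly `g b - g a - 1` ranks of the block above it. -/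
def straighten (b a : Fin n) (g : Perm (Fin n)) : Perm (Fin n) :=
  (Fin.cycleIcc (Fin.cycleIcc b (g b) (g a)) (a - (g b - Fin.cycleIcc b (g b) (g a))))⁻¹ *
    (Fin.cycleIcc b (g b) * g)

lemma val_cycleIcc_apply_right (hg : g ∈ blockSubgroup b a) (hba : b < a) (h : g a < g b) :
    (Fin.cycleIcc b (g b) (g a) : ℕ) = g a + 1 := by
  have := apply_right_mem hg hba.le
  rw [Fin.val_cycleIcc]
  simp only [Set.mem_Icc, Fin.lt_def, Fin.le_def, Fin.ext_iff] at this h ⊢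
  split_ifs <;> omega

lemma straighten_apply_right (hg : g ∈ blockSubgroup b a) (hba : b < a) (h : g a < g b) :
    straighten b a g a = a - (g b - Fin.cycleIcc b (g b) (g a)) ∧
      (straighten b a g a : ℕ) = a + 1 + g a - g b := by
  have h₁ := val_cycleIcc_apply_right hg hba h
  have hb := apply_left_mem hg hba.le
  have : NeZero n := a.neZero
  rw [straighten, mul_apply, mul_apply]
  set s' := Fin.cycleIcc b (g b) (g a)
  have hs't : s' ≤ g b := by rw [Fin.le_def]; omega
  have hval : ((a - (g b - s') : Fin n) : ℕ) = a - (g b - s') := by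
    rw [Fin.sub_val_of_le, Fin.sub_val_of_le hs't]
    rw [Fin.le_def, Fin.sub_val_of_le hs't]
    have := hb.2
    omega
  rw [Perm.inv_eq_iff_eq.2 (Fin.cycleIcc_of_last ?_).symm, hval]
  · exact ⟨rfl, by omega⟩
  · rw [Fin.le_def, hval]
    have := hb.2
    omega

lemma straighten_apply_left (hg : g ∈ blockSubgroup b a) (hba : b < a) (h : g a < g b) :
    straighten b a g b = b := by
  have h₁ := val_cycleIcc_apply_right hg hba h
  have ha := apply_right_mem hg hba.le
  have : NeZero n := a.neZero
  rw [straighten, mul_apply, mul_apply, Fin.cycleIcc_of_last (apply_left_mem hg hba.le).1,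
    Perm.inv_eq_iff_eq, Fin.cycleIcc_of_lt]
  rw [Fin.lt_def]
  have := ha.1
  omega

lemma straighten_mem (hg : g ∈ blockSubgroup b a) (hba : b < a) (h : g a < g b) :
    straighten b a g ∈ blockSubgroup b a := by
  have h₁ := val_cycleIcc_apply_right hg hba h
  have hb := apply_left_mem hg hba.le
  have ha := apply_right_mem hg hba.le
  have hr := straighten_apply_right hg hba h
  refine mul_mem (inv_mem (cycleIcc_mem_blockSubgroup ?_ ?_))
    (mul_mem (cycleIcc_mem_blockSubgroup le_rfl hb.2) hg)
  · rw [Fin.le_def]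
    have := ha.1
    omega
  · rw [← hr.1, Fin.le_def, hr.2]
    have := hb.2
    omega

lemma card_inversions_straighten (hg : g ∈ blockSubgroup b a) (hba : b < a) (h : g a < g b) :
    #g.inversions = #(straighten b a g).inversions + (a - b : ℕ) := by
  have hs' := val_cycleIcc_apply_right hg hba h
  have hb := apply_left_mem hg hba.le
  have ha := apply_right_mem hg hba.le
  have hr := straighten_apply_right hg hba h
  have hdown := card_inversions_cycleIcc_mul_apply_left hg hba.le le_rfl
  have hup := card_inversions_cycleIcc_mul_apply_right (straighten_mem hg hba h) hba.le
    (i := Fin.cycleIcc b (g b) (g a)) (by rw [Fin.le_def]; have := ha.1; omega)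
  have hundo : Fin.cycleIcc (Fin.cycleIcc b (g b) (g a)) (straighten b a g a) *
      straighten b a g = Fin.cycleIcc b (g b) * g := by
    rw [hr.1]
    exact mul_inv_cancel_left _ _
  rw [hundo] at hup
  have := hb.2
  have := ha.1
  omega

lemma straighten_injOn (hba : b < a) (s : Fin n) :
    Set.InjOn (straighten b a) {g | g ∈ blockSubgroup b a ∧ g a < g b ∧ g a = s} := by
  rintro g ⟨hg, h, rfl⟩ g' ⟨hg', h', hgg'⟩ heq
  have hr := congrArg (fun f : Perm (Fin n) => (f a : ℕ)) heq
  simp only [(straighten_apply_right hg hba h).2, (straighten_apply_right hg' hba h').2, hgg']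
    at hr
  have := (apply_left_mem hg hba.le).2
  have := (apply_left_mem hg' hba.le).2
  have hgb : g' b = g b := Fin.ext (by rw [Fin.lt_def] at h h'; omega)
  simp only [straighten, hgg', hgb] at heq
  exact mul_left_cancel (mul_left_cancel heq)

theorem sum_blockSubgroup_le {φ : ℝ} (hφ : 0 ≤ φ) (hba : b < a) :
    ∑ g with g ∈ blockSubgroup b a ∧ g a < g b, φ ^ #g.inversions ≤
      #(Icc b a) * φ ^ (a - b : ℕ) *
        ∑ g with g ∈ blockSubgroup b a ∧ g b < g a, φ ^ #g.inversions := by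
  rw [← sum_fiberwise_of_maps_to (t := Icc b a) (g := fun g : Perm (Fin n) => g a)
    fun g hg => by simpa using apply_right_mem (mem_filter.1 hg).2.1 hba.le]
  rw [mul_assoc, ← nsmul_eq_mul, ← sum_const]
  refine sum_le_sum fun s _ => ?_
  set A := ({g | g ∈ blockSubgroup b a ∧ g a < g b} : Finset (Perm (Fin n))).filter (· a = s)
  have hA {g} (hg : g ∈ A) : g ∈ blockSubgroup b a ∧ g a < g b ∧ g a = s := by
    simpa [A, and_assoc] using hg
  calc ∑ g ∈ A, φ ^ #g.inversions
      = φ ^ (a - b : ℕ) * ∑ g ∈ A, φ ^ #(straighten b a g).inversions := by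
        rw [mul_sum]
        refine sum_congr rfl fun g hg => ?_
        rw [card_inversions_straighten (hA hg).1 hba (hA hg).2.1, pow_add, mul_comm]
    _ = φ ^ (a - b : ℕ) * ∑ g ∈ A.image (straighten b a), φ ^ #g.inversions := by
        rw [sum_image fun g hg g' hg' => straighten_injOn hba s (hA hg) (hA hg')]
    _ ≤ φ ^ (a - b : ℕ) * ∑ g with g ∈ blockSubgroup b a ∧ g b < g a, φ ^ #g.inversions := by
        refine mul_le_mul_of_nonneg_left (sum_le_sum_of_subset_of_nonneg ?_
          fun _ _ _ => pow_nonneg hφ _) (pow_nonneg hφ _)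
        intro g' hg'
        obtain ⟨g, hg, rfl⟩ := mem_image.1 hg'
        obtain ⟨hg, h, -⟩ := hA hg
        simp only [mem_filter, mem_univ, true_and]
        refine ⟨straighten_mem hg hba h, ?_⟩
        have := (apply_left_mem hg hba.le).2
        have := (apply_right_mem hg hba.le).1
        rw [straighten_apply_left hg hba h, Fin.lt_def, (straighten_apply_right hg hba h).2]
        omega

end Straighten

noncomputable def weightBefore (φ : ℝ) (x y : Fin n) (ρ : Perm (Fin n)) : ℝ :=
  if ρ x < ρ y then φ ^ #ρ.inversions else 0

lemma weightBefore_nonneg {φ : ℝ} (hφ : 0 ≤ φ) (x y : Fin n) (ρ : Perm (Fin n)) :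
    0 ≤ weightBefore φ x y ρ := by
  unfold weightBefore
  split_ifs <;> positivity

lemma weightBefore_add_weightBefore (φ : ℝ) {x y : Fin n} (hxy : x ≠ y) (ρ : Perm (Fin n)) :
    weightBefore φ x y ρ + weightBefore φ y x ρ = φ ^ #ρ.inversions := by
  rcases lt_or_gt_of_ne (ρ.injective.ne hxy) with h | h <;>
    simp [weightBefore, h, not_lt_of_gt h]

lemma one_le_sum_weightBefore {φ : ℝ} (hφ : 0 ≤ φ) {x y : Fin n} (hxy : x < y) :
    1 ≤ ∑ ρ, weightBefore φ x y ρ := by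
  have h1 : weightBefore φ x y 1 = 1 := by
    rw [weightBefore, one_apply, one_apply, if_pos hxy, inversions_one, card_empty, pow_zero]
  rw [← h1]
  exact single_le_sum (fun ρ _ => weightBefore_nonneg hφ x y ρ) (mem_univ 1)

lemma weightBefore_mul {φ : ℝ} {ρ g : Perm (Fin n)} (hρ : StrictMonoOn ρ (Set.Icc b a))
    (hg : g ∈ blockSubgroup b a) {x y : Fin n} (hx : x ∈ Set.Icc b a) (hy : y ∈ Set.Icc b a) :
    weightBefore φ x y (ρ * g) = φ ^ #ρ.inversions * weightBefore φ x y g := by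
  simp only [weightBefore, mul_apply,
    hρ.lt_iff_lt ((apply_mem_Icc_iff hg).2 hx) ((apply_mem_Icc_iff hg).2 hy),
    card_inversions_mul hρ hg, pow_add, mul_ite, mul_zero]

theorem sum_weightBefore_le {φ : ℝ} (hφ : 0 ≤ φ) (hba : b < a) :
    ∑ ρ, weightBefore φ a b ρ ≤ #(Icc b a) * φ ^ (a - b : ℕ) * ∑ ρ, weightBefore φ b a ρ := by
  refine sum_le_mul_sum_of_forall_coset (S := {g | g ∈ blockSubgroup b a})
    ⟨1, by simp [one_mem]⟩ fun ρ => ?_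
  obtain ⟨g₀, hg₀, hmono⟩ := exists_strictMonoOn_mul ρ b a
  have hcoset (x y : Fin n) (hx : x ∈ Set.Icc b a) (hy : y ∈ Set.Icc b a) :
      ∑ g with g ∈ blockSubgroup b a, weightBefore φ x y (ρ * g) =
        φ ^ #(ρ * g₀).inversions *
          ∑ g with g ∈ blockSubgroup b a ∧ g x < g y, φ ^ #g.inversions := by
    rw [← sum_mem_subgroup_mul_left _ hg₀, mul_sum]
    conv_rhs => rw [← filter_filter, sum_filter]
    refine sum_congr rfl fun g hg => ?_
    rw [← mul_assoc, weightBefore_mul hmono (mem_filter.1 hg).2 hx hy, weightBefore, mul_ite,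
      mul_zero]
  have ha : a ∈ Set.Icc b a := ⟨hba.le, le_rfl⟩
  have hb : b ∈ Set.Icc b a := ⟨le_rfl, hba.le⟩
  rw [hcoset a b ha hb, hcoset b a hb ha, mul_left_comm]
  exact mul_le_mul_of_nonneg_left (sum_blockSubgroup_le hφ hba) (pow_nonneg hφ _)

end Equiv.Perm

lemma sum_ite_pow_kendall {n : ℕ} (σk : Perm (Fin n)) (φ : ℝ) (i j : Fin n) :
    ∑ σ : Perm (Fin n), (if σ i < σ j then φ ^ kendall σ σk else 0) =
      ∑ ρ, weightBefore φ (σk i) (σk j) ρ := by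
  rw [← Equiv.sum_comp (Equiv.mulRight σk)]
  simp [weightBefore, kendall_eq_card_inversions, mul_apply]

lemma mallowsBeta_eq {n : ℕ} (σk : Perm (Fin n)) (φ : ℝ) {i j : Fin n} (hij : i ≠ j) :
    mallowsBeta σk φ i j = (∑ ρ, weightBefore φ (σk i) (σk j) ρ) /
      (∑ ρ, weightBefore φ (σk i) (σk j) ρ + ∑ ρ, weightBefore φ (σk j) (σk i) ρ) := by
  have hZ : ∑ τ : Perm (Fin n), φ ^ kendall τ σk = ∑ τ : Perm (Fin n), φ ^ #τ.inversions := by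
    rw [← Equiv.sum_comp (Equiv.mulRight σk)]
    simp [kendall_eq_card_inversions]
  rw [← sum_add_distrib, sum_congr rfl fun ρ _ => weightBefore_add_weightBefore φ
    (σk.injective.ne hij) ρ, ← hZ, ← sum_ite_pow_kendall, sum_div]
  refine sum_congr rfl fun σ _ => ?_
  rw [mallowsProb, ite_div, zero_div]

theorem stmt4_general (Q : ℕ) (σk : Equiv.Perm (Fin Q)) (φ : ℝ)
    (hφ0 : 0 ≤ φ) (i j : Fin Q) (h : σk j < σk i)
    (L : ℕ) (hL : L = (σk i : ℕ) - (σk j : ℕ) + 1) :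
    mallowsBeta σk φ i j ≤ (L:ℝ) * φ ^ (L-1) / (1 + (L:ℝ) * φ ^ (L-1)) := by
  rw [mallowsBeta_eq σk φ fun hij => h.ne (by rw [hij])]
  have hle := sum_weightBefore_le hφ0 h
  rw [Fin.card_Icc, show (σk i : ℕ) + 1 - σk j = L by omega,
    show (σk i : ℕ) - σk j = L - 1 by omega] at hle
  have hB := one_le_sum_weightBefore hφ0 h
  have hA := sum_nonneg fun ρ (_ : ρ ∈ univ) => weightBefore_nonneg hφ0 (σk i) (σk j) ρ
  have hC : 0 ≤ (L : ℝ) * φ ^ (L - 1) := by positivity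
  rw [div_le_div_iff₀ (by linarith) (by linarith)]
  linear_combination hle

/-- If item `j` is preferred to item `i` in the reference ranking `σk`
(`σk j < σk i`) of a Mallows distribution with dispersion `0 ≤ φ < 1`, and
`L = σk i - σk j + 1`, then the probability that `i` is ranked before `j`
satisfies `β_(i,j) ≤ L φ^(L-1)/(1 + L φ^(L-1))`. -/
theorem stmt4 (Q : ℕ) (σk : Equiv.Perm (Fin Q)) (φ : ℝ)
    (hφ0 : 0 ≤ φ) (hφ1 : φ < 1) (i j : Fin Q) (h : σk j < σk i)
    (L : ℕ) (hL : L = (σk i : ℕ) - (σk j : ℕ) + 1) :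
    mallowsBeta σk φ i j ≤ (L:ℝ) * φ ^ (L-1) / (1 + (L:ℝ) * φ ^ (L-1)) :=
  stmt4_general Q σk φ hφ0 i j h L hL
end

section
/- Let σ be a permutation of Q items and φ ∈ [0,1), and let β_{(i,j)} be the probability under the Mallows distribution with reference σ and dispersion φ that item i is ranked before item j. If σ(i) < σ(j) (i preferred to j in the reference) and φ < 1, then β_{(i,j)} > 1/2 > β_{(j,i)}. -/
/-! ### Auxiliary lemmas -/

lemma kendall_self {Q : ℕ} (σ : Equiv.Perm (Fin Q)) : kendall σ σ = 0 := by
  simp [kendall]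

/-- Indicator that a (not necessarily ordered) pair of distinct indices is
ranked differently by `τ` and `σ`. -/
def disag {Q : ℕ} (τ σ : Equiv.Perm (Fin Q)) (p : Fin Q × Fin Q) : ℕ :=
  if p.1 ≠ p.2 ∧ ¬ ((τ p.1 < τ p.2) ↔ (σ p.1 < σ p.2)) then 1 else 0

/-- Indicator restricted to ordered pairs. -/
def gOrd {Q : ℕ} (τ σ : Equiv.Perm (Fin Q)) (p : Fin Q × Fin Q) : ℕ :=
  if p.1 < p.2 ∧ ¬ ((τ p.1 < τ p.2) ↔ (σ p.1 < σ p.2)) then 1 else 0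

/-- Doubled Kendall distance, counting ordered pairs in both orders. -/
def kendall2 {Q : ℕ} (τ σ : Equiv.Perm (Fin Q)) : ℕ :=
  ∑ p : Fin Q × Fin Q, disag τ σ p

lemma disag_eq {Q : ℕ} (τ σ : Equiv.Perm (Fin Q)) (p : Fin Q × Fin Q) :
    disag τ σ p = gOrd τ σ p + gOrd τ σ p.swap := by
  have h1 : τ p.1 = τ p.2 ↔ p.1 = p.2 := EmbeddingLike.apply_eq_iff_eq τ
  have h2 : σ p.1 = σ p.2 ↔ p.1 = p.2 := EmbeddingLike.apply_eq_iff_eq σ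
  unfold disag gOrd
  simp only [Prod.fst_swap, Prod.snd_swap]
  split_ifs <;> omega

lemma kendall_eq_sum {Q : ℕ} (τ σ : Equiv.Perm (Fin Q)) :
    kendall τ σ = ∑ p : Fin Q × Fin Q, gOrd τ σ p := by
  rw [kendall, Finset.card_filter]; rfl

lemma kendall2_eq {Q : ℕ} (τ σ : Equiv.Perm (Fin Q)) :
    kendall2 τ σ = 2 * kendall τ σ := by
  have hswap : (∑ p : Fin Q × Fin Q, gOrd τ σ p.swap) = ∑ p : Fin Q × Fin Q, gOrd τ σ p :=
    Equiv.sum_comp (Equiv.prodComm (Fin Q) (Fin Q)) (gOrd τ σ)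
  rw [kendall2, kendall_eq_sum]
  simp only [disag_eq, Finset.sum_add_distrib, hswap]
  ring

set_option maxHeartbeats 1000000 in
lemma term_le {Q : ℕ} (σ π : Equiv.Perm (Fin Q)) (i j : Fin Q)
    (h : σ i < σ j) (hπ : π j < π i) (p : Fin Q × Fin Q) :
    disag (π * Equiv.swap i j) σ p
      + disag (π * Equiv.swap i j) σ (Equiv.swap i j p.1, Equiv.swap i j p.2)
      + (if p = (i, j) then 2 else 0)
    ≤ disag π σ p + disag π σ (Equiv.swap i j p.1, Equiv.swap i j p.2) := by
  obtain ⟨a, b⟩ := p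
  simp only [disag, Equiv.Perm.mul_apply, Prod.mk.injEq, Equiv.swap_apply_def, ne_eq]
  split_ifs <;> (try subst_vars) <;> omega

lemma kendall2_reindex {Q : ℕ} (τ σ : Equiv.Perm (Fin Q)) (i j : Fin Q) :
    kendall2 τ σ = ∑ p : Fin Q × Fin Q, disag τ σ (Equiv.swap i j p.1, Equiv.swap i j p.2) :=
  (Equiv.sum_comp (Equiv.prodCongr (Equiv.swap i j) (Equiv.swap i j)) (disag τ σ)).symm

/-- Key combinatorial lemma: if the reference ranks `i` before `j` but `π`
ranks `j` before `i`, then composing `π` with the transposition of `i` and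
`j` strictly decreases the Kendall distance to the reference. -/
lemma kendall_key {Q : ℕ} (σ π : Equiv.Perm (Fin Q)) (i j : Fin Q)
    (h : σ i < σ j) (hπ : π j < π i) :
    kendall (π * Equiv.swap i j) σ + 1 ≤ kendall π σ := by
  have key : 2 * kendall2 (π * Equiv.swap i j) σ + 2 ≤ 2 * kendall2 π σ := by
    have h1 := kendall2_reindex (π * Equiv.swap i j) σ i j
    have h2 := kendall2_reindex π σ i j
    have hc : (∑ p : Fin Q × Fin Q, if p = (i, j) then 2 else 0) = 2 := by
      rw [Finset.sum_ite_eq' Finset.univ (i, j) (fun _ => 2)]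
      simp
    calc 2 * kendall2 (π * Equiv.swap i j) σ + 2
        = ∑ p : Fin Q × Fin Q, (disag (π * Equiv.swap i j) σ p
            + disag (π * Equiv.swap i j) σ (Equiv.swap i j p.1, Equiv.swap i j p.2)
            + (if p = (i, j) then 2 else 0)) := by
          simp only [Finset.sum_add_distrib, hc, ← h1, kendall2, two_mul]
      _ ≤ ∑ p : Fin Q × Fin Q, (disag π σ p
            + disag π σ (Equiv.swap i j p.1, Equiv.swap i j p.2)) :=
          Finset.sum_le_sum (fun p _ => term_le σ π i j h hπ p)
      _ = 2 * kendall2 π σ := by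
          simp only [Finset.sum_add_distrib, ← h2, kendall2, two_mul]
  rw [kendall2_eq, kendall2_eq] at key
  omega

/-- If item `i` is preferred to item `j` in the reference ranking `σ`
(`σ i < σ j`) of a Mallows distribution with dispersion `0 ≤ φ < 1`, then
`β_(i,j) > 1/2 > β_(j,i)`. -/
theorem stmt5 (Q : ℕ) (σ : Equiv.Perm (Fin Q)) (φ : ℝ)
    (hφ0 : 0 ≤ φ) (hφ1 : φ < 1) (i j : Fin Q) (h : σ i < σ j) :
    mallowsBeta σ φ i j > 1/2 ∧ 1/2 > mallowsBeta σ φ j i := by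
  classical
  have hij : i ≠ j := fun e => absurd h (by simp [e])
  set w : Equiv.Perm (Fin Q) → ℝ := fun π => φ ^ kendall π σ with hw
  set Z : ℝ := ∑ τ : Equiv.Perm (Fin Q), w τ with hZ
  set A : ℝ := ∑ π ∈ Finset.univ.filter (fun π : Equiv.Perm (Fin Q) => π i < π j), w π with hA
  set B : ℝ := ∑ π ∈ Finset.univ.filter (fun π : Equiv.Perm (Fin Q) => π j < π i), w π with hB
  have hwpos : ∀ π : Equiv.Perm (Fin Q), 0 ≤ w π := fun π => pow_nonneg hφ0 _
  have hA1 : 1 ≤ A := by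
    have hm : σ ∈ Finset.univ.filter (fun π : Equiv.Perm (Fin Q) => π i < π j) := by
      simp [h]
    have := Finset.single_le_sum (f := w) (fun π _ => hwpos π) hm
    simpa [hw, kendall_self] using this
  have hB0 : 0 ≤ B := Finset.sum_nonneg (fun π _ => hwpos π)
  have hBle : B ≤ φ * A := by
    have step : ∀ π ∈ Finset.univ.filter (fun π : Equiv.Perm (Fin Q) => π j < π i),
        w π ≤ φ * w (π * Equiv.swap i j) := by
      intro π hm
      simp only [Finset.mem_filter] at hm
      have hk := kendall_key σ π i j h hm.2
      calc w π = φ ^ kendall π σ := rfl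
        _ ≤ φ ^ (kendall (π * Equiv.swap i j) σ + 1) :=
            pow_le_pow_of_le_one hφ0 hφ1.le hk
        _ = φ * w (π * Equiv.swap i j) := by rw [pow_succ]; ring
    have hbij : (∑ π ∈ Finset.univ.filter (fun π : Equiv.Perm (Fin Q) => π j < π i),
        φ * w (π * Equiv.swap i j)) = φ * A := by
      rw [hA, ← Finset.mul_sum]
      congr 1
      refine Finset.sum_bij' (fun π _ => π * Equiv.swap i j) (fun π _ => π * Equiv.swap i j)
        ?_ ?_ ?_ ?_ ?_
      · intro π hm
        simp only [Finset.mem_filter, Finset.mem_univ, true_and] at hm ⊢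
        simpa [Equiv.Perm.mul_apply] using hm
      · intro π hm
        simp only [Finset.mem_filter, Finset.mem_univ, true_and] at hm ⊢
        simpa [Equiv.Perm.mul_apply] using hm
      · intro π _; simp [mul_assoc]
      · intro π _; simp [mul_assoc]
      · intro π _; rfl
    calc B ≤ ∑ π ∈ Finset.univ.filter (fun π : Equiv.Perm (Fin Q) => π j < π i),
        φ * w (π * Equiv.swap i j) := Finset.sum_le_sum step
      _ = φ * A := hbij
  have hBA : B < A := lt_of_le_of_lt hBle (by nlinarith)
  have hABZ : A + B = Z := by
    rw [hA, hB, hZ]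
    rw [← Finset.sum_filter_add_sum_filter_not Finset.univ
      (fun π : Equiv.Perm (Fin Q) => π i < π j) w]
    congr 1
    apply Finset.sum_congr _ (fun _ _ => rfl)
    apply Finset.filter_congr
    intro π _
    have hne : π i ≠ π j := fun e => hij (π.injective e)
    constructor
    · intro h1; omega
    · intro h1; omega
  have hZpos : 0 < Z := by nlinarith
  have hbeta : ∀ a b : Fin Q, mallowsBeta σ φ a b
      = (∑ π ∈ Finset.univ.filter (fun π : Equiv.Perm (Fin Q) => π a < π b), w π) / Z := by
    intro a b
    rw [mallowsBeta, Finset.sum_div, ← Finset.sum_filter]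
    rfl
  have h1 : mallowsBeta σ φ i j = A / Z := hbeta i j
  have h2 : mallowsBeta σ φ j i = B / Z := hbeta j i
  rw [h1, h2]
  constructor
  · rw [gt_iff_lt, lt_div_iff₀ hZpos]; linarith
  · rw [gt_iff_lt, div_lt_iff₀ hZpos]; linarith
end

section
/- Let Y be a K×W real matrix whose Gram matrix YY^T has minimum eigenvalue λ_{min,Y} > 0. Let E ∈ R^W and let S = {b ∈ R^K : b ≥ 0, Σ b_j = 1} be the probability simplex. Suppose b* ∈ S satisfies ‖E - b*Y‖₂ = 0, and let b̂ minimize ‖Ê - bŶ‖₂ over S, where ‖Ê - E‖₂ ≤ δ₂ and each row of Ŷ differs from the corresponding row of Y by at most δ₁ in Euclidean norm. Then ‖b̂ - b*‖₂ ≤ 4(δ₁+δ₂)/λ_{min,Y}. -/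
/-- Perturbed constrained least squares over the simplex. Let `Y` be a `K×W`
matrix whose smallest singular value is at least `lminY > 0` (equivalently,
the Gram matrix `YYᵀ` has minimum eigenvalue `lminY² > 0`), expressed by the
Rayleigh-quotient hypothesis `hRay`. Suppose `b*` in the simplex satisfies
`E = b*Y` exactly, and `b̂` minimizes `‖Ê - bŶ‖₂` over the simplex, where
`‖Ê - E‖₂ ≤ δ₂` and each row of `Ŷ` is within `δ₁` of the corresponding row
of `Y`. Then `‖b̂ - b*‖₂ ≤ 4(δ₁+δ₂)/lminY`. -/
theorem stmt14 (W K : ℕ) (Y Yhat : Fin K → Fin W → ℝ) (E Ehat : Fin W → ℝ)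
    (lminY : ℝ) (hl0 : 0 < lminY)
    (hRay : ∀ b : Fin K → ℝ,
      lminY * Real.sqrt (∑ j, (b j)^2)
        ≤ Real.sqrt (∑ w, (∑ j, b j * Y j w)^2))
    (bstar bhat : Fin K → ℝ)
    (hbs0 : ∀ j, 0 ≤ bstar j) (hbs1 : ∑ j, bstar j = 1)
    (hbh0 : ∀ j, 0 ≤ bhat j) (hbh1 : ∑ j, bhat j = 1)
    (hexact : ∀ w, E w = ∑ j, bstar j * Y j w)
    (hopt : ∀ b : Fin K → ℝ, (∀ j, 0 ≤ b j) → (∑ j, b j = 1) →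
      Real.sqrt (∑ w, (Ehat w - ∑ j, bhat j * Yhat j w)^2)
        ≤ Real.sqrt (∑ w, (Ehat w - ∑ j, b j * Yhat j w)^2))
    (δ1 δ2 : ℝ)
    (hE : Real.sqrt (∑ w, (Ehat w - E w)^2) ≤ δ2)
    (hY : ∀ j, Real.sqrt (∑ w, (Yhat j w - Y j w)^2) ≤ δ1) :
    Real.sqrt (∑ j, (bhat j - bstar j)^2) ≤ 4 * (δ1 + δ2) / lminY := by
  have hK : K ≠ 0 := by rintro rfl; simp at hbs1
  have hδ1 : 0 ≤ δ1 := le_trans (Real.sqrt_nonneg _) (hY ⟨0, Nat.pos_of_ne_zero hK⟩)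
  have hδ2 : 0 ≤ δ2 := le_trans (Real.sqrt_nonneg _) hE
  set T := (WithLp.linearEquiv 2 ℝ (Fin W → ℝ)).symm with hTdef
  have hN : ∀ x : Fin W → ℝ, Real.sqrt (∑ w, (x w)^2) = ‖T x‖ := by
    intro x
    rw [EuclideanSpace.norm_eq]
    congr 1
    refine Finset.sum_congr rfl fun w _ => ?_
    rw [Real.norm_eq_abs, sq_abs]
    rfl
  have hA : ∀ (Z : Fin K → Fin W → ℝ) (b : Fin K → ℝ),
      T (fun w => ∑ j, b j * Z j w) = ∑ j, b j • T (Z j) := by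
    intro Z b
    have : (fun w => ∑ j, b j * Z j w) = ∑ j, b j • Z j := by
      funext w; simp [Finset.sum_apply]
    rw [this, map_sum]
    simp
  have hconv : ∀ b : Fin K → ℝ, (∀ j, 0 ≤ b j) → (∑ j, b j = 1) →
      ‖T (fun w => ∑ j, b j * Yhat j w) - T (fun w => ∑ j, b j * Y j w)‖ ≤ δ1 := by
    intro b hb0 hb1
    rw [hA, hA, ← Finset.sum_sub_distrib]
    have : ∀ j, b j • T (Yhat j) - b j • T (Y j) = b j • (T (Yhat j) - T (Y j)) := by
      intro j; rw [smul_sub]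
    simp_rw [this]
    calc ‖∑ j, b j • (T (Yhat j) - T (Y j))‖
        ≤ ∑ j, ‖b j • (T (Yhat j) - T (Y j))‖ := norm_sum_le _ _
      _ = ∑ j, b j * ‖T (Yhat j) - T (Y j)‖ := by
          refine Finset.sum_congr rfl fun j _ => ?_
          rw [norm_smul, Real.norm_eq_abs, abs_of_nonneg (hb0 j)]
      _ ≤ ∑ j, b j * δ1 := by
          refine Finset.sum_le_sum fun j _ => ?_
          refine mul_le_mul_of_nonneg_left ?_ (hb0 j)
          rw [← map_sub]
          have : Yhat j - Y j = fun w => Yhat j w - Y j w := rfl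
          rw [this, ← hN]
          exact hY j
      _ = δ1 := by rw [← Finset.sum_mul, hb1, one_mul]
  -- convert hypotheses to norm form
  have hTE : T E = T (fun w => ∑ j, bstar j * Y j w) := by
    congr 1; funext w; exact hexact w
  have hEn : ‖T Ehat - T E‖ ≤ δ2 := by
    rw [← map_sub]
    have : Ehat - E = fun w => Ehat w - E w := rfl
    rw [this, ← hN]; exact hE
  have hoptn : ‖T Ehat - T (fun w => ∑ j, bhat j * Yhat j w)‖
      ≤ ‖T Ehat - T (fun w => ∑ j, bstar j * Yhat j w)‖ := by
    have h := hopt bstar hbs0 hbs1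
    rw [hN, hN] at h
    have e1 : (fun w => Ehat w - ∑ j, bhat j * Yhat j w)
        = Ehat - fun w => ∑ j, bhat j * Yhat j w := rfl
    have e2 : (fun w => Ehat w - ∑ j, bstar j * Yhat j w)
        = Ehat - fun w => ∑ j, bstar j * Yhat j w := rfl
    rw [e1, e2, map_sub, map_sub] at h
    exact h
  -- Rayleigh
  have hray := hRay (fun j => bhat j - bstar j)
  have hray2 : lminY * Real.sqrt (∑ j, (bhat j - bstar j)^2)
      ≤ ‖T (fun w => ∑ j, bhat j * Y j w) - T (fun w => ∑ j, bstar j * Y j w)‖ := by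
    refine le_trans hray ?_
    have e : (fun w => ∑ j, (bhat j - bstar j) * Y j w)
        = (fun w => ∑ j, bhat j * Y j w) - (fun w => ∑ j, bstar j * Y j w) := by
      funext w
      simp [sub_mul, Finset.sum_sub_distrib]
    rw [hN, e, map_sub]
  -- chain
  set u1 := T (fun w => ∑ j, bhat j * Y j w)
  set u2 := T (fun w => ∑ j, bhat j * Yhat j w)
  set v1 := T (fun w => ∑ j, bstar j * Y j w)
  set v2 := T (fun w => ∑ j, bstar j * Yhat j w)
  have key : ‖u1 - v1‖ ≤ 2 * (δ1 + δ2) := by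
    have h1 : ‖u1 - v1‖ ≤ ‖u1 - u2‖ + ‖u2 - T Ehat‖ + ‖T Ehat - v1‖ := by
      have e : u1 - v1 = (u1 - u2) + (u2 - T Ehat) + (T Ehat - v1) := by abel
      rw [e]; exact norm_add₃_le
    have h2 : ‖u1 - u2‖ ≤ δ1 := by
      rw [norm_sub_rev]; exact hconv bhat hbh0 hbh1
    have h3 : ‖u2 - T Ehat‖ ≤ ‖T Ehat - v2‖ := by
      rw [norm_sub_rev]; exact hoptn
    have h4 : ‖T Ehat - v2‖ ≤ ‖T Ehat - T E‖ + ‖v1 - v2‖ := by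
      have : T Ehat - v2 = (T Ehat - T E) + (v1 - v2) := by rw [hTE]; abel
      rw [this]; exact norm_add_le _ _
    have h5 : ‖v1 - v2‖ ≤ δ1 := by
      rw [norm_sub_rev]; exact hconv bstar hbs0 hbs1
    have h6 : ‖T Ehat - v1‖ ≤ δ2 := by rw [hTE] at hEn; exact hEn
    nlinarith [norm_nonneg (u2 - T Ehat)]
  have hfin : lminY * Real.sqrt (∑ j, (bhat j - bstar j)^2) ≤ 2 * (δ1 + δ2) :=
    le_trans hray2 key
  rw [le_div_iff₀ hl0]
  nlinarith [hfin, hδ1, hδ2]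
end
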